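/- Let A : E → E be an invertible bounded linear operator on a finite-dimensional inner product space E, and let x ∈ E with x ≠ 0. Setting v = -A^{-1} x, one has ⟨A* x, -v⟩ / (‖A* x‖ ‖v‖) ≥ 1 / (‖A‖ ‖A^{-1}‖). Consequently, for any θ with 0 ≤ θ < 1/(‖A‖ ‖A^{-1}‖), the Newton direction v satisfies ⟨A* x, v⟩ ≤ -θ ‖A* x‖ ‖v‖. -/
import Mathlib


open scoped RealInnerProductSpace

/-- Angle estimate for the Newton direction: with `v = -A⁻¹ x`, `x ≠ 0`,
`⟨A* x, -v⟩ / (‖A* x‖‖v‖) ≥ 1/(‖A‖‖A⁻¹‖)`; hence for `0 ≤ θ < 1/(‖A‖‖A⁻¹‖)`,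
`⟨A* x, v⟩ ≤ -θ ‖A* x‖ ‖v‖`. -/
theorem stmt2 {E : Type*} [NormedAddCommGroup E] [InnerProductSpace ℝ E]
    [FiniteDimensional ℝ E]
    (A : E ≃L[ℝ] E) (x : E) (hx : x ≠ 0) (v : E) (hv : v = -(A.symm x)) :
    (1 / (‖(A : E →L[ℝ] E)‖ * ‖(A.symm : E →L[ℝ] E)‖) ≤
      ⟪(ContinuousLinearMap.adjoint (A : E →L[ℝ] E)) x, -v⟫ /
        (‖(ContinuousLinearMap.adjoint (A : E →L[ℝ] E)) x‖ * ‖v‖)) ∧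
    ∀ θ : ℝ, 0 ≤ θ → θ < 1 / (‖(A : E →L[ℝ] E)‖ * ‖(A.symm : E →L[ℝ] E)‖) →
      ⟪(ContinuousLinearMap.adjoint (A : E →L[ℝ] E)) x, v⟫ ≤
        -θ * (‖(ContinuousLinearMap.adjoint (A : E →L[ℝ] E)) x‖ * ‖v‖) := by
  set B := ContinuousLinearMap.adjoint (A : E →L[ℝ] E) with hB
  have key : ⟪B x, A.symm x⟫ = ‖x‖ ^ 2 := by
    rw [hB, ContinuousLinearMap.adjoint_inner_left]
    simp [real_inner_self_eq_norm_sq]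
  have hxpos : (0 : ℝ) < ‖x‖ ^ 2 := pow_pos (norm_pos_iff.2 hx) 2
  have hBx : 0 < ‖B x‖ := by
    rcases (norm_pos_iff).2 (fun h : B x = 0 => by
      rw [h, inner_zero_left] at key; linarith) with h
    exact h
  have hvx : A.symm x ≠ 0 := fun h => hx (by
    have := congrArg A h; simpa using this)
  have hvpos : 0 < ‖A.symm x‖ := norm_pos_iff.2 hvx
  have h1 : ‖B x‖ ≤ ‖(A : E →L[ℝ] E)‖ * ‖x‖ := by
    calc ‖B x‖ ≤ ‖B‖ * ‖x‖ := B.le_opNorm x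
    _ = ‖(A : E →L[ℝ] E)‖ * ‖x‖ := by
        rw [hB, ContinuousLinearMap.adjoint.norm_map]
  have h2 : ‖A.symm x‖ ≤ ‖(A.symm : E →L[ℝ] E)‖ * ‖x‖ :=
    (A.symm : E →L[ℝ] E).le_opNorm x
  have hnx : 0 < ‖x‖ := norm_pos_iff.2 hx
  have hAn : 0 < ‖(A : E →L[ℝ] E)‖ := by nlinarith
  have hBn : 0 < ‖(A.symm : E →L[ℝ] E)‖ := by nlinarith
  have hprod : ‖B x‖ * ‖A.symm x‖ ≤
      (‖(A : E →L[ℝ] E)‖ * ‖x‖) * (‖(A.symm : E →L[ℝ] E)‖ * ‖x‖) :=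
    mul_le_mul h1 h2 (norm_nonneg _) (by positivity)
  constructor
  · rw [hv, neg_neg, norm_neg, div_le_div_iff₀ (by positivity) (by positivity), key]
    nlinarith
  · intro θ hθ hθ'
    rw [hv, inner_neg_right, key, norm_neg]
    have hθP : θ * (‖(A : E →L[ℝ] E)‖ * ‖(A.symm : E →L[ℝ] E)‖) < 1 :=
      (lt_div_iff₀ (by positivity)).1 hθ'
    nlinarith [mul_nonneg (norm_nonneg (B x)) (norm_nonneg (A.symm x))]
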